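/- Let (G,u) and (H,v) be Archimedean abelian ℓ-groups with strong units and let ι : G → H be an injective group homomorphism preserving ⊓ and ⊔ with ι(u) = v. Then the following are equivalent: (a) the map sending a polar P of H to P ∩ ι(G) is a bijection from the polars of H onto the polars of the ℓ-subgroup ι(G), with inverse sending a polar Q of ι(G) to Q^⊥⊥ computed in H; (b) for every y ∈ H with y > 0 there exist x ∈ G and an integer n > 0 such that 0 < ι(x) ≤ n·y. (These are the characterizations of ι being an essential extension.) -/

import Mathlib

/-- The absolute value `|g| = (g ⊔ 0) + ((-g) ⊔ 0)` in a lattice-ordered abelian group. -/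
def absl {A : Type*} [Lattice A] [AddCommGroup A] (g : A) : A :=
  (g ⊔ 0) + (-g ⊔ 0)

/-- The polar `T^⊥ = {x : |x| ⊓ |t| = 0 for all t ∈ T}` computed in the whole group. -/
def polar {A : Type*} [Lattice A] [AddCommGroup A] (T : Set A) : Set A :=
  {x : A | ∀ t ∈ T, absl x ⊓ absl t = 0}

/-- The polar of `T` computed relative to the ℓ-subgroup (carrier) `S`. -/
def polarIn {A : Type*} [Lattice A] [AddCommGroup A] (S T : Set A) : Set A :=
  {x ∈ S | ∀ t ∈ T, absl x ⊓ absl t = 0}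

/-- `P` is a polar of the whole group: `P = P^⊥⊥`. -/
def IsPolar {A : Type*} [Lattice A] [AddCommGroup A] (P : Set A) : Prop :=
  P = polar (polar P)

/-- `Q` is a polar of the ℓ-subgroup with carrier `S`: `Q = Q^⊥⊥` computed in `S`. -/
def IsPolarIn {A : Type*} [Lattice A] [AddCommGroup A] (S Q : Set A) : Prop :=
  Q = polarIn S (polarIn S Q)

/-- `A` is Archimedean: whenever `0 ≤ n • g ≤ h` for all integers `n ≥ 1`, then `g = 0`. -/
def IsArch (A : Type*) [Lattice A] [AddCommGroup A] : Prop :=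
  ∀ g h : A, (∀ n : ℕ, 1 ≤ n → 0 ≤ n • g ∧ n • g ≤ h) → g = 0

/-!
Write `S = ι(G)`. If some multiple of every `y > 0` dominates a positive element of `S`, then
`(R^⊥ ∩ S)^⊥ = R^⊥⊥` for every `R`: otherwise there are `h ∈ (R^⊥ ∩ S)^⊥` and `t ∈ R^⊥` with
`|h| ⊓ |t| > 0`, and a positive `s ∈ S` below a multiple of `|h| ⊓ |t|` lies in `R^⊥ ∩ S`,
hence is disjoint from itself. This identity makes `P ↦ P ∩ S` and `Q ↦ Q^⊥⊥` mutually inverse.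

Conversely, if no multiple of `y > 0` dominates a positive element of `S`, pick `k` with
`k • y ≰ v` (Archimedean) and put `w = (v - k • y)⁺`. Since `v ≤ w + k • y` and `v` is a strong
unit, every element of the polar `{w}^⊥` is bounded by a multiple of `y`, so this polar meets `S`
only in `0`; yet it contains `(k • y - v)⁺ > 0`, so it is not recovered from its trace on `S`.
-/

def IsOrderDense {A : Type*} [Lattice A] [AddCommGroup A] (S : Set A) : Prop :=
  ∀ y : A, 0 < y → ∃ s ∈ S, ∃ n : ℕ, 0 < n ∧ 0 < s ∧ s ≤ n • y

section Polar

variable {A : Type*} [Lattice A] [AddCommGroup A]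

lemma polar_antitone : Antitone (polar : Set A → Set A) :=
  fun _ _ h _ hx t ht => hx t (h ht)

lemma subset_polar_polar (T : Set A) : T ⊆ polar (polar T) :=
  fun x hx t ht => by rw [inf_comm]; exact ht x hx

lemma polar_polar_polar (T : Set A) : polar (polar (polar T)) = polar T :=
  (polar_antitone (subset_polar_polar T)).antisymm (subset_polar_polar (polar T))

lemma isPolar_polar (T : Set A) : IsPolar (polar T) :=
  (polar_polar_polar T).symm

lemma polarIn_eq_inter_polar (S T : Set A) : polarIn S T = S ∩ polar T := rfl

variable [AddLeftMono A]

lemma absl_eq_abs (g : A) : absl g = |g| :=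
  posPart_add_negPart g

lemma mem_polar_iff {x : A} {T : Set A} : x ∈ polar T ↔ ∀ t ∈ T, |x| ⊓ |t| = 0 := by
  simp only [polar, Set.mem_ofPred_eq, absl_eq_abs]

lemma eq_zero_of_abs_eq_zero {a : A} (h : |a| = 0) : a = 0 := by
  rw [← posPart_add_negPart] at h
  obtain ⟨hpos, hneg⟩ := (add_eq_zero_iff_of_nonneg (posPart_nonneg a) (negPart_nonneg a)).1 h
  rw [← posPart_sub_negPart a, hpos, hneg, sub_zero]

lemma polar_singleton_zero : polar ({0} : Set A) = Set.univ :=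
  Set.eq_univ_of_forall fun x =>
    mem_polar_iff.2 fun t ht => by
      rw [Set.mem_singleton_iff.1 ht, abs_zero, inf_eq_right.2 (abs_nonneg x)]

lemma polar_univ : polar (Set.univ : Set A) = {0} := by
  ext x
  refine ⟨fun hx => ?_, fun hx => ?_⟩
  · have hxx := mem_polar_iff.1 hx x (Set.mem_univ x)
    rw [inf_idem] at hxx
    exact eq_zero_of_abs_eq_zero hxx
  · rw [Set.mem_singleton_iff.1 hx]
    exact mem_polar_iff.2 fun t _ => by rw [abs_zero, inf_eq_left.2 (abs_nonneg t)]

lemma polar_polar_singleton_zero : polar (polar ({0} : Set A)) = {0} := by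
  rw [polar_singleton_zero, polar_univ]

end Polar

section LatticeOrderedGroup

variable {A : Type*} [Lattice A] [AddCommGroup A] [AddLeftMono A]

lemma inf_add_le_inf_add_inf {a b c : A} (ha : 0 ≤ a) (hb : 0 ≤ b) (hc : 0 ≤ c) :
    a ⊓ (b + c) ≤ a ⊓ b + a ⊓ c := by
  have hle_a : a ⊓ (b + c) - a ⊓ b ≤ a :=
    (sub_le_self _ (le_inf ha hb)).trans inf_le_left
  have hle_c : a ⊓ (b + c) - a ⊓ b ≤ c := by
    rw [sub_le_iff_le_add, add_inf]
    exact le_inf (inf_le_left.trans (le_add_of_nonneg_left hc))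
      (inf_le_right.trans (add_comm b c).le)
  exact sub_le_iff_le_add'.1 (le_inf hle_a hle_c)

lemma inf_nsmul_eq_zero {a b : A} (ha : 0 ≤ a) (hb : 0 ≤ b) (h : a ⊓ b = 0) (n : ℕ) :
    a ⊓ n • b = 0 := by
  induction n with
  | zero => simpa using inf_eq_right.2 ha
  | succ n ih =>
    refine le_antisymm ?_ (le_inf ha (nsmul_nonneg hb _))
    calc a ⊓ (n + 1) • b ≤ a ⊓ n • b + a ⊓ b :=
          succ_nsmul b n ▸ inf_add_le_inf_add_inf ha (nsmul_nonneg hb n) hb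
      _ = 0 := by rw [ih, h, add_zero]

lemma le_of_le_add_of_inf_eq_zero {a b c : A} (ha : 0 ≤ a) (hb : 0 ≤ b) (hc : 0 ≤ c)
    (habc : a ≤ b + c) (hab : a ⊓ b = 0) : a ≤ c :=
  calc a = a ⊓ (b + c) := (inf_eq_left.2 habc).symm
    _ ≤ a ⊓ b + a ⊓ c := inf_add_le_inf_add_inf ha hb hc
    _ = a ⊓ c := by rw [hab, zero_add]
    _ ≤ c := inf_le_right

lemma inf_eq_zero_of_le_nsmul {a b c : A} {n : ℕ} (ha : 0 ≤ a) (hb : 0 ≤ b) (hc : 0 ≤ c)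
    (hab : a ≤ n • b) (hbc : b ⊓ c = 0) : a ⊓ c = 0 := by
  refine le_antisymm ?_ (le_inf ha hc)
  calc a ⊓ c ≤ n • b ⊓ c := inf_le_inf_right c hab
    _ = 0 := by rw [inf_comm, inf_nsmul_eq_zero hc hb (by rwa [inf_comm]) n]

theorem polar_polar_inter_eq_polar_polar {S : Set A} (hS : IsOrderDense S) (R : Set A) :
    polar (polar R ∩ S) = polar (polar R) := by
  refine Set.Subset.antisymm ?_ (polar_antitone Set.inter_subset_left)
  intro x hx t ht
  rw [absl_eq_abs, absl_eq_abs]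
  by_contra hne
  obtain ⟨s, hsS, n, -, hs, hsle⟩ :=
    hS _ ((le_inf (abs_nonneg x) (abs_nonneg t)).lt_of_ne' hne)
  have hsR : s ∈ polar R := mem_polar_iff.2 fun r hr => by
    rw [abs_of_nonneg hs.le]
    exact inf_eq_zero_of_le_nsmul hs.le (abs_nonneg t) (abs_nonneg r)
      (hsle.trans (nsmul_le_nsmul_right inf_le_right n)) (mem_polar_iff.1 ht r hr)
  have hxs : |x| ⊓ s = 0 := by
    simpa [abs_of_nonneg hs.le] using mem_polar_iff.1 hx s ⟨hsR, hsS⟩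
  have hss : s ⊓ s = 0 := inf_eq_zero_of_le_nsmul hs.le (abs_nonneg x) hs.le
    (hsle.trans (nsmul_le_nsmul_right inf_le_left n)) hxs
  exact hs.ne' (by rwa [inf_idem] at hss)

theorem polar_correspondence_of_isOrderDense {S : Set A} (hS : IsOrderDense S) :
    (∀ P : Set A, IsPolar P → IsPolarIn S (P ∩ S)) ∧
    (∀ P : Set A, IsPolar P → polar (polar (P ∩ S)) = P) ∧
    (∀ Q : Set A, IsPolarIn S Q → IsPolar (polar (polar Q)) ∧ polar (polar Q) ∩ S = Q) := by
  have polar_inter : ∀ P : Set A, IsPolar P → polar (P ∩ S) = polar P := fun P hP => by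
    conv_lhs => rw [hP]
    rw [polar_polar_inter_eq_polar_polar hS, polar_polar_polar]
  refine ⟨fun P hP => ?_, fun P hP => ?_, fun Q hQ => ⟨isPolar_polar _, ?_⟩⟩
  · rw [IsPolarIn, polarIn_eq_inter_polar, polarIn_eq_inter_polar, polar_inter P hP,
      Set.inter_comm S (polar P), polar_polar_inter_eq_polar_polar hS, ← hP, Set.inter_comm]
  · rw [polar_inter P hP, ← hP]
  · rw [IsPolarIn, polarIn_eq_inter_polar, polarIn_eq_inter_polar] at hQ
    rw [← polar_polar_inter_eq_polar_polar hS, Set.inter_comm (polar Q) S, Set.inter_comm _ S]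
    exact hQ.symm

theorem exists_isPolar_pos_abs_le_nsmul (hA : IsArch A) {v : A}
    (hv : ∀ a : A, ∃ n : ℕ, 1 ≤ n ∧ a ≤ n • v) {y : A} (hy : 0 < y) :
    ∃ P : Set A, IsPolar P ∧ (∃ z ∈ P, 0 < z) ∧ ∀ x ∈ P, ∃ n : ℕ, 0 < n ∧ |x| ≤ n • y := by
  obtain ⟨k, hk, hkv⟩ : ∃ k : ℕ, 1 ≤ k ∧ ¬ k • y ≤ v := by
    by_contra! hk
    exact hy.ne' (hA y v fun n hn => ⟨nsmul_nonneg hy.le n, hk n hn⟩)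
  set w := (v - k • y)⁺
  have hw : 0 ≤ w := posPart_nonneg _
  have hvw : v ≤ w + k • y := sub_le_iff_le_add.1 (le_posPart _)
  refine ⟨polar {w}, isPolar_polar _, ⟨(k • y - v)⁺, ?_, ?_⟩, fun x hx => ?_⟩
  · refine mem_polar_iff.2 fun t ht => ?_
    have hw_neg : w = (k • y - v)⁻ := by rw [← posPart_neg, neg_sub]
    rw [Set.mem_singleton_iff.1 ht, abs_of_nonneg (posPart_nonneg _), abs_of_nonneg hw, hw_neg]
    exact posPart_inf_negPart_eq_zero _
  · refine (posPart_nonneg _).lt_of_ne' fun h0 => hkv ?_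
    exact sub_nonpos.1 (posPart_eq_zero.1 h0)
  · obtain ⟨m, hm, hxm⟩ := hv |x|
    have hxw : |x| ⊓ m • w = 0 := inf_nsmul_eq_zero (abs_nonneg x) hw
      (by simpa [abs_of_nonneg hw] using mem_polar_iff.1 hx w rfl) m
    refine ⟨m * k, Nat.mul_pos hm hk, le_of_le_add_of_inf_eq_zero (abs_nonneg x)
      (nsmul_nonneg hw m) (nsmul_nonneg hy.le _) ?_ hxw⟩
    calc |x| ≤ m • v := hxm
      _ ≤ m • (w + k • y) := nsmul_le_nsmul_right hvw m
      _ = m • w + (m * k) • y := by rw [nsmul_add, mul_nsmul']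

theorem isOrderDense_of_polar_polar_inter_eq (hA : IsArch A) {v : A}
    (hv : ∀ a : A, ∃ n : ℕ, 1 ≤ n ∧ a ≤ n • v) {S : Set A} (habs : ∀ s ∈ S, |s| ∈ S)
    (hS : ∀ P : Set A, IsPolar P → polar (polar (P ∩ S)) = P) : IsOrderDense S := by
  intro y hy
  by_contra! hy_not
  obtain ⟨P, hP, ⟨z, hzP, hz⟩, hPy⟩ := exists_isPolar_pos_abs_le_nsmul hA hv hy
  have htrace : P ∩ S ⊆ {0} := fun x ⟨hxP, hxS⟩ => by
    obtain ⟨n, hn, hxn⟩ := hPy x hxP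
    have hx_not : ¬ 0 < |x| := fun hpos => hy_not _ (habs x hxS) n hn hpos hxn
    exact eq_zero_of_abs_eq_zero ((abs_nonneg x).eq_of_not_lt hx_not).symm
  have hP0 : P ⊆ {0} := by
    rw [← hS P hP, ← polar_polar_singleton_zero]
    exact polar_antitone (polar_antitone htrace)
  exact hz.ne' (hP0 hzP)

end LatticeOrderedGroup

theorem statement7_general {G H : Type*}
    [Lattice G] [AddCommGroup G]
    [Lattice H] [AddCommGroup H] [CovariantClass H H (· + ·) (· ≤ ·)]
    (hHarch : IsArch H)
    (v : H) (hv : ∀ h : H, ∃ n : ℕ, 1 ≤ n ∧ h ≤ n • v)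
    (ι : G → H)
    (hadd : ∀ a b : G, ι (a + b) = ι a + ι b)
    (hsup : ∀ a b : G, ι (a ⊔ b) = ι a ⊔ ι b) :
    ((∀ P : Set H, IsPolar P → IsPolarIn (Set.range ι) (P ∩ Set.range ι)) ∧
     (∀ P : Set H, IsPolar P → polar (polar (P ∩ Set.range ι)) = P) ∧
     (∀ Q : Set H, IsPolarIn (Set.range ι) Q →
        IsPolar (polar (polar Q)) ∧ polar (polar Q) ∩ Set.range ι = Q))
    ↔
    (∀ y : H, 0 < y → ∃ (x : G) (n : ℕ), 0 < n ∧ 0 < ι x ∧ ι x ≤ n • y) := by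
  have hdense : IsOrderDense (Set.range ι) ↔
      ∀ y : H, 0 < y → ∃ (x : G) (n : ℕ), 0 < n ∧ 0 < ι x ∧ ι x ≤ n • y := by
    simp only [IsOrderDense, Set.exists_range_iff]
  have habs : ∀ s ∈ Set.range ι, |s| ∈ Set.range ι := by
    rintro _ ⟨x, rfl⟩
    have hneg : ι (-x) = -ι x := map_neg (AddMonoidHom.mk' ι hadd) x
    exact ⟨|x|, by rw [abs, hsup, hneg]; rfl⟩
  rw [← hdense]
  exact ⟨fun h => isOrderDense_of_polar_polar_inter_eq hHarch hv habs h.2.1,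
    polar_correspondence_of_isOrderDense⟩

/-- Characterisations of essential extensions of Archimedean ℓ-groups with strong
unit: the polar-bijection condition (a) is equivalent to the density-type
condition (b). -/
theorem statement7 {G H : Type*}
    [Lattice G] [AddCommGroup G] [CovariantClass G G (· + ·) (· ≤ ·)]
    [Lattice H] [AddCommGroup H] [CovariantClass H H (· + ·) (· ≤ ·)]
    (hGarch : IsArch G) (hHarch : IsArch H)
    (u : G) (hu0 : 0 ≤ u) (hu : ∀ g : G, ∃ n : ℕ, 1 ≤ n ∧ g ≤ n • u)
    (v : H) (hv0 : 0 ≤ v) (hv : ∀ h : H, ∃ n : ℕ, 1 ≤ n ∧ h ≤ n • v)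
    (ι : G → H) (hinj : Function.Injective ι)
    (hadd : ∀ a b : G, ι (a + b) = ι a + ι b)
    (hinf : ∀ a b : G, ι (a ⊓ b) = ι a ⊓ ι b)
    (hsup : ∀ a b : G, ι (a ⊔ b) = ι a ⊔ ι b)
    (huv : ι u = v) :
    ((∀ P : Set H, IsPolar P → IsPolarIn (Set.range ι) (P ∩ Set.range ι)) ∧
     (∀ P : Set H, IsPolar P → polar (polar (P ∩ Set.range ι)) = P) ∧
     (∀ Q : Set H, IsPolarIn (Set.range ι) Q →
        IsPolar (polar (polar Q)) ∧ polar (polar Q) ∩ Set.range ι = Q))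
    ↔
    (∀ y : H, 0 < y → ∃ (x : G) (n : ℕ), 0 < n ∧ 0 < ι x ∧ ι x ≤ n • y) :=
  statement7_general hHarch v hv ι hadd hsup
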